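/- Error bound for the calculus product approximation: with f, g C³ on B(x⁰, Δ̄) with Hessian Lipschitz constants L_f, L_g, sample set X of radius Δ < Δ̄ with S of full rank (row or column), U = span S, and ∇ᶜᶜ(fg)(X) := f(x⁰)∇ᶜg(X) + g(x⁰)∇ᶜf(X), one has ‖∇ᶜᶜ(fg)(X) − ∇(fg)_U(x⁰)‖ ≤ (√m/6)(L_g|f(x⁰)| + L_f|g(x⁰)|)‖(Ŝᵀ)†‖Δ². -/

import Mathlib

open Metric Matrix

/-- `B` is the Moore–Penrose pseudoinverse of `A`: the four Penrose equations. -/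
def IsMPInv {n m : Type*} [Fintype n] [Fintype m]
    (A : Matrix n m ℝ) (B : Matrix m n ℝ) : Prop :=
  A * B * A = A ∧ B * A * B = B ∧ (A * B)ᵀ = A * B ∧ (B * A)ᵀ = B * A

/-- The ℓ²→ℓ² operator (spectral) norm of a real matrix. -/
noncomputable def opNorm {a b : ℕ} (A : Matrix (Fin a) (Fin b) ℝ) : ℝ :=
  ‖LinearMap.toContinuousLinearMap (Matrix.toEuclideanLin A)‖

/-! A central difference matches the directional derivative up to third order: integrating the
Lipschitz bound on the Hessian along the segment `[x - v, x + v]` gives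
`|(h (x + v) - h (x - v)) / 2 - Dh(x) v| ≤ L ‖v‖³ / 6`. By the product rule the error vector of
`f(x⁰)∇ᶜg + g(x⁰)∇ᶜf` is `P` applied to the vector of combined central-difference errors, whose
entries are at most `(L_g |f(x⁰)| + L_f |g(x⁰)|) Δ³ / 6`; its Euclidean norm is then at most `√m`
times that, and `Δ ‖P‖ = ‖Δ • P‖`. -/

open Set

theorem nonneg_of_norm_sub_le_mul_norm_sub {E F : Type*} [NormedAddCommGroup E]
    [NormedSpace ℝ E] [Nontrivial E] [SeminormedAddCommGroup F] {u : E → F} {x : E} {R L : ℝ}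
    (hR : 0 < R) (hL : ∀ y ∈ ball x R, ‖u y - u x‖ ≤ L * ‖y - x‖) : 0 ≤ L := by
  obtain ⟨v, hv⟩ := exists_norm_eq E (half_pos hR).le
  have hmem : x + v ∈ ball x R := by simp [hv, half_lt_self hR]
  have := (norm_nonneg _).trans (hL _ hmem)
  rw [add_sub_cancel_left, hv] at this
  exact nonneg_of_mul_nonneg_left this (half_pos hR)

section Taylor

variable {E F : Type*} [NormedAddCommGroup E] [NormedSpace ℝ E]
  [NormedAddCommGroup F] [NormedSpace ℝ F]

theorem norm_sub_le_of_norm_deriv_le_mul_pow {ψ ψ' : ℝ → F} {K : ℝ} (k : ℕ)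
    (hψ : ∀ t ∈ Icc (0 : ℝ) 1, HasDerivAt ψ (ψ' t) t)
    (hψ' : ∀ t ∈ Ico (0 : ℝ) 1, ‖ψ' t‖ ≤ K * t ^ k) :
    ‖ψ 1 - ψ 0‖ ≤ K / (k + 1) := by
  have hB (t : ℝ) : HasDerivAt (fun t => K * t ^ (k + 1) / (k + 1)) (K * t ^ k) t := by
    refine (((hasDerivAt_pow (k + 1) t).const_mul K).div_const _).congr_deriv ?_
    rw [Nat.add_sub_cancel]
    push_cast
    field_simp
  simpa using image_norm_le_of_norm_deriv_right_le_deriv_boundary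
    (f := fun t => ψ t - ψ 0) (a := 0) (b := 1)
    (fun t ht => (hψ t ht).continuousAt.continuousWithinAt.sub continuousWithinAt_const)
    (fun t ht => ((hψ t (Ico_subset_Icc_self ht)).sub_const (ψ 0)).hasDerivWithinAt)
    (by simp) hB hψ' (right_mem_Icc.2 zero_le_one)

theorem add_smul_mem_ball {x v : E} {R t : ℝ} (hv : ‖v‖ < R) (ht : t ∈ Icc (0 : ℝ) 1) :
    x + t • v ∈ ball x R := by
  rw [mem_ball_iff_norm, add_sub_cancel_left, norm_smul, Real.norm_of_nonneg ht.1]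
  exact (mul_le_of_le_one_left (norm_nonneg v) ht.2).trans_lt hv

theorem norm_sub_sub_fderiv_le {φ : E → F} {φ' : E → E →L[ℝ] F} {x v : E} {R L : ℝ}
    (hφ : ∀ y ∈ ball x R, HasFDerivAt φ (φ' y) y)
    (hL : ∀ y ∈ ball x R, ‖φ' y - φ' x‖ ≤ L * ‖y - x‖) (hv : ‖v‖ < R) :
    ‖φ (x + v) - φ x - φ' x v‖ ≤ L * ‖v‖ ^ 2 / 2 := by
  have hψ : ∀ t ∈ Icc (0 : ℝ) 1, HasDerivAt (fun t : ℝ => φ (x + t • v) - t • φ' x v)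
      (φ' (x + t • v) v - φ' x v) t := by
    intro t ht
    have hline : HasDerivAt (fun t : ℝ => x + t • v) v t := by
      simpa using ((hasDerivAt_id t).smul_const v).const_add x
    exact (((hφ _ (add_smul_mem_ball hv ht)).comp_hasDerivAt t hline).sub
      ((hasDerivAt_id t).smul_const (φ' x v))).congr_deriv (by simp)
  have hψ' : ∀ t ∈ Ico (0 : ℝ) 1, ‖φ' (x + t • v) v - φ' x v‖ ≤ L * ‖v‖ ^ 2 * t ^ 1 := by
    intro t ht
    have hmem := add_smul_mem_ball (x := x) hv (Ico_subset_Icc_self ht)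
    calc ‖φ' (x + t • v) v - φ' x v‖ ≤ ‖φ' (x + t • v) - φ' x‖ * ‖v‖ :=
          (φ' (x + t • v) - φ' x).le_opNorm v
      _ ≤ L * ‖t • v‖ * ‖v‖ := by
          gcongr
          simpa using hL _ hmem
      _ = L * ‖v‖ ^ 2 * t ^ 1 := by
          rw [norm_smul, Real.norm_of_nonneg ht.1]; ring
  have := norm_sub_le_of_norm_deriv_le_mul_pow 1 hψ hψ'
  norm_num at this
  convert this using 2
  abel

theorem norm_add_add_sub_two_smul_le {φ : E → F} {φ' : E → E →L[ℝ] F} {x v : E} {R L : ℝ}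
    (hφ : ∀ y ∈ ball x R, HasFDerivAt φ (φ' y) y)
    (hL : ∀ y ∈ ball x R, ‖φ' y - φ' x‖ ≤ L * ‖y - x‖) (hv : ‖v‖ < R) :
    ‖φ (x + v) + φ (x - v) - (2 : ℝ) • φ x‖ ≤ L * ‖v‖ ^ 2 := by
  have hplus := norm_sub_sub_fderiv_le hφ hL hv
  have hminus := norm_sub_sub_fderiv_le (v := -v) hφ hL (by rwa [norm_neg])
  rw [norm_neg] at hminus
  have hsplit : φ (x + v) + φ (x - v) - (2 : ℝ) • φ x =
      (φ (x + v) - φ x - φ' x v) + (φ (x + -v) - φ x - φ' x (-v)) := by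
    rw [map_neg, ← sub_eq_add_neg, two_smul]
    abel
  rw [hsplit]
  linarith [norm_add_le (φ (x + v) - φ x - φ' x v) (φ (x + -v) - φ x - φ' x (-v))]

theorem hasDerivAt_centralDiff {h : E → F} {h' : E → E →L[ℝ] F} {x v : E} {t : ℝ}
    (hplus : HasFDerivAt h (h' (x + t • v)) (x + t • v))
    (hminus : HasFDerivAt h (h' (x - t • v)) (x - t • v)) :
    HasDerivAt (fun t : ℝ => h (x + t • v) - h (x - t • v) - (2 * t) • h' x v)
      ((h' (x + t • v) + h' (x - t • v) - (2 : ℝ) • h' x) v) t := by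
  have hline_plus : HasDerivAt (fun t : ℝ => x + t • v) v t := by
    simpa using ((hasDerivAt_id t).smul_const v).const_add x
  have hline_minus : HasDerivAt (fun t : ℝ => x - t • v) (-v) t := by
    simpa using ((hasDerivAt_id t).smul_const v).const_sub x
  refine (((hplus.comp_hasDerivAt t hline_plus).sub
    (hminus.comp_hasDerivAt t hline_minus)).sub
    (((hasDerivAt_id t).const_mul 2).smul_const (h' x v))).congr_deriv ?_
  simp only [map_neg, _root_.sub_apply, _root_.add_apply, _root_.smul_apply, mul_one]
  abel

theorem norm_centralDiff_sub_fderiv_le {h : E → F} {x v : E} {R L : ℝ}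
    (hh : ContDiffOn ℝ 2 h (ball x R))
    (hL : ∀ y ∈ ball x R,
      ‖fderiv ℝ (fderiv ℝ h) y - fderiv ℝ (fderiv ℝ h) x‖ ≤ L * ‖y - x‖)
    (hv : ‖v‖ < R) :
    ‖(2 : ℝ)⁻¹ • (h (x + v) - h (x - v)) - fderiv ℝ h x v‖ ≤ L * ‖v‖ ^ 3 / 6 := by
  have hD : ∀ y ∈ ball x R, HasFDerivAt h (fderiv ℝ h y) y := fun y hy =>
    ((hh.contDiffAt (isOpen_ball.mem_nhds hy)).differentiableAt (by norm_num)).hasFDerivAt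
  have hD2 : ∀ y ∈ ball x R, HasFDerivAt (fderiv ℝ h) (fderiv ℝ (fderiv ℝ h) y) y :=
    fun y hy => (((hh.contDiffAt (isOpen_ball.mem_nhds hy)).fderiv_right (m := 1)
      (by norm_num)).differentiableAt (by norm_num)).hasFDerivAt
  have hmem_sub : ∀ t ∈ Icc (0 : ℝ) 1, x - t • v ∈ ball x R := fun t ht => by
    simpa [sub_eq_add_neg] using add_smul_mem_ball (x := x) (v := -v) (by rwa [norm_neg]) ht
  have hψ (t : ℝ) (ht : t ∈ Icc (0 : ℝ) 1) :=
    hasDerivAt_centralDiff (hD _ (add_smul_mem_ball hv ht)) (hD _ (hmem_sub t ht))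
  have hψ' : ∀ t ∈ Ico (0 : ℝ) 1,
      ‖(fderiv ℝ h (x + t • v) + fderiv ℝ h (x - t • v) - (2 : ℝ) • fderiv ℝ h x) v‖ ≤
        L * ‖v‖ ^ 3 * t ^ 2 := by
    intro t ht
    have htv : ‖t • v‖ < R := by simpa using add_smul_mem_ball (x := 0) hv (Ico_subset_Icc_self ht)
    calc _ ≤ ‖fderiv ℝ h (x + t • v) + fderiv ℝ h (x - t • v) - (2 : ℝ) • fderiv ℝ h x‖ * ‖v‖ :=
          ContinuousLinearMap.le_opNorm _ v
      _ ≤ L * ‖t • v‖ ^ 2 * ‖v‖ := by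
          gcongr
          exact norm_add_add_sub_two_smul_le hD2 hL htv
      _ = L * ‖v‖ ^ 3 * t ^ 2 := by
          rw [norm_smul, Real.norm_of_nonneg ht.1]; ring
  have hint := norm_sub_le_of_norm_deriv_le_mul_pow 2 hψ hψ'
  simp only [one_smul, zero_smul, add_zero, sub_zero, mul_one, mul_zero, sub_self] at hint
  have hhalf : (2 : ℝ)⁻¹ • (h (x + v) - h (x - v)) - fderiv ℝ h x v =
      (2 : ℝ)⁻¹ • (h (x + v) - h (x - v) - (2 : ℝ) • fderiv ℝ h x v) := by
    rw [smul_sub _ _ ((2 : ℝ) • fderiv ℝ h x v), smul_smul, inv_mul_cancel₀ two_ne_zero,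
      one_smul]
  rw [hhalf, norm_smul]
  norm_num at hint ⊢
  linarith

theorem abs_centralDiff_sub_fderiv_le [Nontrivial E] {h : E → ℝ} {x v : E} {R L Δ : ℝ}
    (hh : ContDiffOn ℝ 2 h (ball x R))
    (hL : ∀ y ∈ ball x R,
      ‖fderiv ℝ (fderiv ℝ h) y - fderiv ℝ (fderiv ℝ h) x‖ ≤ L * ‖y - x‖)
    (hv : ‖v‖ ≤ Δ) (hΔ : Δ < R) :
    |(h (x + v) - h (x - v)) / 2 - fderiv ℝ h x v| ≤ L * Δ ^ 3 / 6 := by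
  have hL₀ : 0 ≤ L := nonneg_of_norm_sub_le_mul_norm_sub (u := fderiv ℝ (fderiv ℝ h))
    ((norm_nonneg v).trans_lt (hv.trans_lt hΔ)) hL
  have hcentral := norm_centralDiff_sub_fderiv_le hh hL (hv.trans_lt hΔ)
  rw [Real.norm_eq_abs, smul_eq_mul, ← div_eq_inv_mul] at hcentral
  exact hcentral.trans (by gcongr)

end Taylor

theorem EuclideanSpace.norm_toLp_le_sqrt_card_mul {ι : Type*} [Fintype ι] {v : ι → ℝ} {c : ℝ}
    (hv : ∀ i, |v i| ≤ c) :
    ‖(WithLp.toLp 2 v : EuclideanSpace ℝ ι)‖ ≤ √(Fintype.card ι) * c := by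
  rcases isEmpty_or_nonempty ι with _ | ⟨⟨i₀⟩⟩
  · simp [Subsingleton.elim v 0]
  have hc : 0 ≤ c := (abs_nonneg _).trans (hv i₀)
  rw [EuclideanSpace.norm_eq, ← Real.sqrt_sq hc, ← Real.sqrt_mul (Nat.cast_nonneg _)]
  gcongr
  calc ∑ i, ‖v i‖ ^ 2 ≤ ∑ _i : ι, c ^ 2 := by
        gcongr with i
        exact (Real.norm_eq_abs _).trans_le (hv i)
    _ = Fintype.card ι * c ^ 2 := by simp

section OpNorm

open scoped Matrix.Norms.L2Operator

variable {a b : ℕ}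

theorem norm_toLp_mulVec_le_opNorm (A : Matrix (Fin a) (Fin b) ℝ) (v : Fin b → ℝ) :
    ‖(WithLp.toLp 2 (A *ᵥ v) : EuclideanSpace ℝ (Fin a))‖ ≤
      opNorm A * ‖(WithLp.toLp 2 v : EuclideanSpace ℝ (Fin b))‖ :=
  A.l2_opNorm_mulVec (WithLp.toLp 2 v)

theorem opNorm_nonneg (A : Matrix (Fin a) (Fin b) ℝ) : 0 ≤ opNorm A := norm_nonneg _

theorem opNorm_smul (r : ℝ) (A : Matrix (Fin a) (Fin b) ℝ) : opNorm (r • A) = |r| * opNorm A :=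
  (norm_smul r A).trans (by rw [Real.norm_eq_abs]; rfl)

end OpNorm

theorem transpose_mulVec_ofLp_gradient {ι κ : Type*} [Fintype ι] [Fintype κ]
    (F : EuclideanSpace ℝ κ → ℝ) (x : EuclideanSpace ℝ κ) (d : ι → EuclideanSpace ℝ κ) :
    (Matrix.of fun j i => d i j)ᵀ *ᵥ WithLp.ofLp (gradient F x) = fun i => fderiv ℝ F x (d i) := by
  funext i
  rw [← inner_gradient_left]
  simp [mulVec, dotProduct, PiLp.inner_apply, -inner_gradient_left]

theorem norm_gradient_mul_approx_sub_le {n m : ℕ} {f g : EuclideanSpace ℝ (Fin n) → ℝ}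
    {x : EuclideanSpace ℝ (Fin n)} (hf : DifferentiableAt ℝ f x) (hg : DifferentiableAt ℝ g x)
    (d : Fin m → EuclideanSpace ℝ (Fin n)) (P : Matrix (Fin n) (Fin m) ℝ) {a b : Fin m → ℝ}
    {εf εg : ℝ} (ha : ∀ i, |a i - fderiv ℝ g x (d i)| ≤ εg)
    (hb : ∀ i, |b i - fderiv ℝ f x (d i)| ≤ εf) :
    ‖(WithLp.toLp 2 (f x • P *ᵥ a + g x • P *ᵥ b -
        (P * (Matrix.of fun j i => d i j)ᵀ) *ᵥ WithLp.ofLp (gradient (fun y => f y * g y) x)) :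
      EuclideanSpace ℝ (Fin n))‖ ≤ opNorm P * (√m * (|f x| * εg + |g x| * εf)) := by
  set e : Fin m → ℝ := fun i => f x * (a i - fderiv ℝ g x (d i)) + g x * (b i - fderiv ℝ f x (d i))
  have he : ∀ i, |e i| ≤ |f x| * εg + |g x| * εf := fun i => by
    refine (abs_add_le _ _).trans ?_
    rw [abs_mul, abs_mul]
    gcongr
    exacts [ha i, hb i]
  have hvec : f x • P *ᵥ a + g x • P *ᵥ b -
      (P * (Matrix.of fun j i => d i j)ᵀ) *ᵥ WithLp.ofLp (gradient (fun y => f y * g y) x) =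
        P *ᵥ e := by
    have he_eq : e = f x • a + g x • b - fun i => fderiv ℝ (fun y => f y * g y) x (d i) := by
      rw [fderiv_fun_mul hf hg]
      funext i
      simp only [e, Pi.add_apply, Pi.sub_apply, Pi.smul_apply, smul_eq_mul,
        _root_.add_apply, _root_.smul_apply]
      ring
    rw [he_eq, ← transpose_mulVec_ofLp_gradient, mulVec_sub, mulVec_add, mulVec_smul, mulVec_smul,
      mulVec_mulVec]
  have hnorm_e := EuclideanSpace.norm_toLp_le_sqrt_card_mul he
  rw [Fintype.card_fin] at hnorm_e
  rw [hvec]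
  grw [norm_toLp_mulVec_le_opNorm, hnorm_e]
  exact opNorm_nonneg P

theorem gcscg_product_error_bound_general {n m : ℕ}
    (f g : EuclideanSpace ℝ (Fin n) → ℝ)
    (x₀ : EuclideanSpace ℝ (Fin n)) (Δbar Lf Lg Δ : ℝ)
    (hf : ContDiffOn ℝ 3 f (ball x₀ Δbar)) (hg : ContDiffOn ℝ 3 g (ball x₀ Δbar))
    (hLf : ∀ x ∈ ball x₀ Δbar, ∀ y ∈ ball x₀ Δbar,
      ‖fderiv ℝ (fderiv ℝ f) x - fderiv ℝ (fderiv ℝ f) y‖ ≤ Lf * ‖x - y‖)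
    (hLg : ∀ x ∈ ball x₀ Δbar, ∀ y ∈ ball x₀ Δbar,
      ‖fderiv ℝ (fderiv ℝ g) x - fderiv ℝ (fderiv ℝ g) y‖ ≤ Lg * ‖x - y‖)
    (d : Fin m → EuclideanSpace ℝ (Fin n))
    (hΔ : ∀ i, ‖d i‖ ≤ Δ) (hΔpos : 0 < Δ) (hΔbar : Δ < Δbar)
    (S : Matrix (Fin n) (Fin m) ℝ) (hS : S = Matrix.of fun j i => d i j)
    (P : Matrix (Fin n) (Fin m) ℝ) :
    ‖(WithLp.equiv 2 (Fin n → ℝ)).symm fun j =>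
        (f x₀ • P.mulVec (fun i => (g (x₀ + d i) - g (x₀ - d i)) / 2) +
          g x₀ • P.mulVec fun i => (f (x₀ + d i) - f (x₀ - d i)) / 2) j -
          (P * Sᵀ).mulVec
            (WithLp.equiv 2 (Fin n → ℝ) (gradient (fun y => f y * g y) x₀)) j‖ ≤
      Real.sqrt m / 6 * (Lg * |f x₀| + Lf * |g x₀|) * opNorm (Δ • P) * Δ ^ 2 := by
  rcases subsingleton_or_nontrivial (EuclideanSpace ℝ (Fin n)) with hE | hE
  · have hzero (w : EuclideanSpace ℝ (Fin n)) : ‖w‖ = 0 := by rw [Subsingleton.elim w 0, norm_zero]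
    rw [hzero, opNorm, Subsingleton.elim (LinearMap.toContinuousLinearMap _) 0, norm_zero]
    simp
  have hx₀ : x₀ ∈ ball x₀ Δbar := mem_ball_self (hΔpos.trans hΔbar)
  have hdiff {h : EuclideanSpace ℝ (Fin n) → ℝ} (hh : ContDiffOn ℝ 3 h (ball x₀ Δbar)) :
      DifferentiableAt ℝ h x₀ :=
    (hh.differentiableOn (by norm_num)).differentiableAt (isOpen_ball.mem_nhds hx₀)
  subst hS
  calc _ ≤ opNorm P * (√m * (|f x₀| * (Lg * Δ ^ 3 / 6) + |g x₀| * (Lf * Δ ^ 3 / 6))) :=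
        norm_gradient_mul_approx_sub_le (hdiff hf) (hdiff hg) d P
          (fun i => abs_centralDiff_sub_fderiv_le (hg.of_le (by norm_num)) (hLg · · x₀ hx₀)
            (hΔ i) hΔbar)
          (fun i => abs_centralDiff_sub_fderiv_le (hf.of_le (by norm_num)) (hLf · · x₀ hx₀)
            (hΔ i) hΔbar)
    _ = _ := by rw [opNorm_smul, abs_of_pos hΔpos]; ring

/-- Error bound for the GCSCG product approximation
`∇ᶜᶜ(fg)(X) = f(x⁰)∇ᶜg(X) + g(x⁰)∇ᶜf(X)`:
`‖∇ᶜᶜ(fg)(X) − ∇(fg)_U(x⁰)‖ ≤ (√m/6)(L_g|f(x⁰)| + L_f|g(x⁰)|)‖(Ŝᵀ)†‖Δ²`,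
where `∇(fg)_U(x⁰) = Proj_U ∇(fg)(x⁰)` with `Proj_U = (Sᵀ)†Sᵀ`. -/
theorem gcscg_product_error_bound {n m : ℕ}
    (f g : EuclideanSpace ℝ (Fin n) → ℝ)
    (x₀ : EuclideanSpace ℝ (Fin n)) (Δbar Lf Lg Δ : ℝ)
    (hf : ContDiffOn ℝ 3 f (ball x₀ Δbar)) (hg : ContDiffOn ℝ 3 g (ball x₀ Δbar))
    (hLf : ∀ x ∈ ball x₀ Δbar, ∀ y ∈ ball x₀ Δbar,
      ‖fderiv ℝ (fderiv ℝ f) x - fderiv ℝ (fderiv ℝ f) y‖ ≤ Lf * ‖x - y‖)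
    (hLg : ∀ x ∈ ball x₀ Δbar, ∀ y ∈ ball x₀ Δbar,
      ‖fderiv ℝ (fderiv ℝ g) x - fderiv ℝ (fderiv ℝ g) y‖ ≤ Lg * ‖x - y‖)
    (d : Fin m → EuclideanSpace ℝ (Fin n))
    (hΔ : ∀ i, ‖d i‖ ≤ Δ) (hΔpos : 0 < Δ) (hΔbar : Δ < Δbar)
    (S : Matrix (Fin n) (Fin m) ℝ) (hS : S = Matrix.of fun j i => d i j)
    (hrank : S.rank = m ∨ S.rank = n)
    (P : Matrix (Fin n) (Fin m) ℝ) (hP : IsMPInv Sᵀ P) :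
    ‖(WithLp.equiv 2 (Fin n → ℝ)).symm fun j =>
        (f x₀ • P.mulVec (fun i => (g (x₀ + d i) - g (x₀ - d i)) / 2) +
          g x₀ • P.mulVec fun i => (f (x₀ + d i) - f (x₀ - d i)) / 2) j -
          (P * Sᵀ).mulVec
            (WithLp.equiv 2 (Fin n → ℝ) (gradient (fun y => f y * g y) x₀)) j‖ ≤
      Real.sqrt m / 6 * (Lg * |f x₀| + Lf * |g x₀|) * opNorm (Δ • P) * Δ ^ 2 :=
  gcscg_product_error_bound_general f g x₀ Δbar Lf Lg Δ hf hg hLf hLg d hΔ hΔpos hΔbar S hS P
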